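/- Let g : ℝ^m × ℝ^n → ℝ be twice continuously differentiable, μ > 0, ℓ_{g,1}, ℓ_{g,2} > 0. Suppose for every x the map y ↦ g(x,y) is μ-strongly convex with unique minimizer y*(x), that y* is continuously differentiable, that ∇g is ℓ_{g,1}-Lipschitz (so in particular ‖∇²_{xy} g(x,y)‖_op ≤ ℓ_{g,1} for all (x,y)), and that the maps (x,y) ↦ ∇²_{xy} g(x,y) and (x,y) ↦ ∇²_{yy} g(x,y) are ℓ_{g,2}-Lipschitz in operator norm. Then the derivative map x ↦ D y*(x) is Lipschitz in operator norm with constant L_{y*} = (ℓ_{g,2}/μ + ℓ_{g,1} ℓ_{g,2}/μ²) √(1 + κ²), where κ = ℓ_{g,1}/μ: for all x, x', ‖D y*(x) − D y*(x')‖_op ≤ L_{y*} ‖x − x'‖. -/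

import Mathlib

/-!
Differentiating the optimality condition `∇_y g (x, y*(x)) = 0` gives `H x ∘ D y*(x) = -C x`,
where `H x = ∇²_{yy} g` and `C x = ∇²_{xy} g` at `(x, y*(x))`. Strong convexity bounds `H x`
below by `μ`, so `‖D y*‖ ≤ κ = ℓ_{g,1}/μ`; hence `y*` is `κ`-Lipschitz and `(x, y*(x))` moves by at
most `√(1 + κ²) ‖x - x'‖`. Finally `H x ∘ (D y*(x) - D y*(x')) = (C x' - C x) - (H x - H x') ∘ D y*(x')`,
and the `ℓ_{g,2}`-Lipschitz bounds on `C` and `H` give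
`μ ‖D y*(x) - D y*(x')‖ ≤ ℓ_{g,2} (1 + κ) √(1 + κ²) ‖x - x'‖`.
-/

/-- Partial gradient in the first (x) variable of a function on a product of
Euclidean spaces. -/
noncomputable def gradx {m n : ℕ}
    (f : EuclideanSpace ℝ (Fin m) × EuclideanSpace ℝ (Fin n) → ℝ)
    (p : EuclideanSpace ℝ (Fin m) × EuclideanSpace ℝ (Fin n)) :
    EuclideanSpace ℝ (Fin m) :=
  gradient (fun x => f (x, p.2)) p.1

/-- Partial gradient in the second (y) variable. -/
noncomputable def grady {m n : ℕ}
    (f : EuclideanSpace ℝ (Fin m) × EuclideanSpace ℝ (Fin n) → ℝ)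
    (p : EuclideanSpace ℝ (Fin m) × EuclideanSpace ℝ (Fin n)) :
    EuclideanSpace ℝ (Fin n) :=
  gradient (fun y => f (p.1, y)) p.2

/-- Cross second derivative ∇²_{xy} f(x,y) : ℝ^m →L ℝ^n, the derivative in x of
the map x ↦ ∇_y f(x,y). -/
noncomputable def crossxy {m n : ℕ}
    (f : EuclideanSpace ℝ (Fin m) × EuclideanSpace ℝ (Fin n) → ℝ)
    (p : EuclideanSpace ℝ (Fin m) × EuclideanSpace ℝ (Fin n)) :
    EuclideanSpace ℝ (Fin m) →L[ℝ] EuclideanSpace ℝ (Fin n) :=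
  fderiv ℝ (fun x => grady f (x, p.2)) p.1

/-- Hessian in y: ∇²_{yy} f(x,y) : ℝ^n →L ℝ^n, the derivative in y of the map
y ↦ ∇_y f(x,y). -/
noncomputable def hessyy {m n : ℕ}
    (f : EuclideanSpace ℝ (Fin m) × EuclideanSpace ℝ (Fin n) → ℝ)
    (p : EuclideanSpace ℝ (Fin m) × EuclideanSpace ℝ (Fin n)) :
    EuclideanSpace ℝ (Fin n) →L[ℝ] EuclideanSpace ℝ (Fin n) :=
  fderiv ℝ (fun y => grady f (p.1, y)) p.2

open ContinuousLinearMap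

section OperatorBounds

variable {E F G : Type*} [NormedAddCommGroup E] [NormedSpace ℝ E] [NormedAddCommGroup F]
  [NormedSpace ℝ F] [NormedAddCommGroup G] [NormedSpace ℝ G] {μ : ℝ} {H : F →L[ℝ] G}

lemma mul_opNorm_le_opNorm_comp (hμ : 0 < μ) (hH : ∀ v, μ * ‖v‖ ≤ ‖H v‖) (D : E →L[ℝ] F) :
    μ * ‖D‖ ≤ ‖H ∘L D‖ := by
  rw [mul_comm, ← le_div_iff₀ hμ]
  refine opNorm_le_bound _ (by positivity) fun u => ?_
  rw [div_mul_eq_mul_div, le_div_iff₀ hμ, mul_comm]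
  exact (hH (D u)).trans (le_opNorm (H ∘L D) u)

lemma opNorm_le_div_of_comp_eq (hμ : 0 < μ) (hH : ∀ v, μ * ‖v‖ ≤ ‖H v‖) {D : E →L[ℝ] F}
    {C : E →L[ℝ] G} (h : H ∘L D = C) {ℓ : ℝ} (hC : ‖C‖ ≤ ℓ) :
    ‖D‖ ≤ ℓ / μ := by
  rw [le_div_iff₀' hμ]
  exact (mul_opNorm_le_opNorm_comp hμ hH D).trans (h ▸ hC)

lemma opNorm_sub_le_of_comp_eq (hμ : 0 < μ) (hH : ∀ v, μ * ‖v‖ ≤ ‖H v‖)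
    {H' : F →L[ℝ] G} {D D' : E →L[ℝ] F} {C C' : E →L[ℝ] G} (h : H ∘L D = C) (h' : H' ∘L D' = C')
    {a κ : ℝ} (hC : ‖C - C'‖ ≤ a) (hHH' : ‖H - H'‖ ≤ a) (hD' : ‖D'‖ ≤ κ) :
    ‖D - D'‖ ≤ a * (1 + κ) / μ := by
  have hdiff : H ∘L (D - D') = (C - C') - (H - H') ∘L D' := by
    rw [comp_sub, sub_comp, h, ← h']
    abel
  refine opNorm_le_div_of_comp_eq hμ hH hdiff ?_
  calc ‖(C - C') - (H - H') ∘L D'‖ ≤ ‖C - C'‖ + ‖H - H'‖ * ‖D'‖ :=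
        (norm_sub_le _ _).trans (add_le_add_right (opNorm_comp_le _ _) _)
    _ ≤ a + a * κ := add_le_add hC (mul_le_mul hHH' hD' (norm_nonneg _) ((norm_nonneg _).trans hC))
    _ = a * (1 + κ) := by ring

end OperatorBounds

section PartialDerivatives

variable {E F G : Type*} [NormedAddCommGroup E] [NormedSpace ℝ E] [NormedAddCommGroup F]
  [NormedSpace ℝ F] [NormedAddCommGroup G] [NormedSpace ℝ G] {f : E × F → G}

lemma fderiv_comp_prodMk_left_eq {p : E × F} (hf : DifferentiableAt ℝ f p) :
    fderiv ℝ (fun x => f (x, p.2)) p.1 = fderiv ℝ f p ∘L inl ℝ E F :=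
  (hf.hasFDerivAt.comp p.1 (hasFDerivAt_prodMk_left p.1 p.2)).fderiv

lemma fderiv_comp_prodMk_right_eq {p : E × F} (hf : DifferentiableAt ℝ f p) :
    fderiv ℝ (fun y => f (p.1, y)) p.2 = fderiv ℝ f p ∘L inr ℝ E F :=
  (hf.hasFDerivAt.comp p.2 (hasFDerivAt_prodMk_right p.1 p.2)).fderiv

lemma fderiv_comp_inr_comp_fderiv_eq_neg {φ : E → F} {c : G} (hf_const : ∀ x, f (x, φ x) = c)
    {x : E} (hf : DifferentiableAt ℝ f (x, φ x)) (hφ : DifferentiableAt ℝ φ x) :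
    (fderiv ℝ f (x, φ x) ∘L inr ℝ E F) ∘L fderiv ℝ φ x = -(fderiv ℝ f (x, φ x) ∘L inl ℝ E F) := by
  have hchain : HasFDerivAt (fun x => f (x, φ x))
      (fderiv ℝ f (x, φ x) ∘L (ContinuousLinearMap.id ℝ E).prod (fderiv ℝ φ x)) x :=
    hf.hasFDerivAt.comp x ((hasFDerivAt_id x).prodMk hφ.hasFDerivAt)
  have hzero : fderiv ℝ f (x, φ x) ∘L (ContinuousLinearMap.id ℝ E).prod (fderiv ℝ φ x) = 0 := by
    simp_rw [hf_const] at hchain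
    exact hchain.unique (hasFDerivAt_const c x)
  refine eq_neg_of_add_eq_zero_left (ContinuousLinearMap.ext fun u => ?_)
  simpa [← map_add] using congr($hzero u)

end PartialDerivatives

section StrongConvexity

open RealInnerProductSpace
open scoped Gradient

variable {F : Type*} [NormedAddCommGroup F] [InnerProductSpace ℝ F] [CompleteSpace F]
  {f : F → ℝ} {μ : ℝ}

lemma monotone_inner_gradient_sub_of_convexOn (hf : Differentiable ℝ f)
    (hconv : ConvexOn ℝ Set.univ (fun y => f y - μ / 2 * ‖y‖ ^ 2)) (y v : F) :
    Monotone (fun t : ℝ => ⟪∇ f (y + t • v), v⟫ - μ * ⟪y + t • v, v⟫) := by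
  have hline : ∀ t : ℝ, HasDerivAt (fun s : ℝ => y + s • v) v t := fun t => by
    simpa using ((hasDerivAt_id t).smul_const v).const_add y
  have hderiv : ∀ t : ℝ, HasDerivAt (fun s : ℝ => f (y + s • v) - μ / 2 * ‖y + s • v‖ ^ 2)
      (⟪∇ f (y + t • v), v⟫ - μ * ⟪y + t • v, v⟫) t := fun t => by
    refine (((hf _).hasFDerivAt.comp_hasDerivAt t (hline t)).sub
      (((hline t).norm_sq).const_mul (μ / 2))).congr_deriv ?_
    rw [← inner_gradient_left]
    ring
  have hconv_line : ConvexOn ℝ Set.univ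
      (fun s : ℝ => f (y + s • v) - μ / 2 * ‖y + s • v‖ ^ 2) := by
    have hcomp : (fun y => f y - μ / 2 * ‖y‖ ^ 2) ∘ AffineMap.lineMap y (y + v) =
        fun s : ℝ => f (y + s • v) - μ / 2 * ‖y + s • v‖ ^ 2 := by
      ext s
      simp [AffineMap.lineMap_apply, add_comm]
    simpa only [hcomp, Set.preimage_univ] using hconv.comp_affineMap (AffineMap.lineMap y (y + v))
  have hmono := hconv_line.monotoneOn_deriv fun t _ => (hderiv t).differentiableAt
  intro s t hst
  simpa only [(hderiv _).deriv] using hmono (Set.mem_univ s) (Set.mem_univ t) hst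

lemma mul_sq_norm_le_inner_of_convexOn (hf : Differentiable ℝ f)
    (hconv : ConvexOn ℝ Set.univ (fun y => f y - μ / 2 * ‖y‖ ^ 2)) {H : F →L[ℝ] F} {y : F}
    (hH : HasFDerivAt (∇ f) H y) (v : F) :
    μ * ‖v‖ ^ 2 ≤ ⟪H v, v⟫ := by
  have hline : HasDerivAt (fun s : ℝ => y + s • v) v 0 := by
    simpa using ((hasDerivAt_id (0 : ℝ)).smul_const v).const_add y
  have hderiv : HasDerivAt (fun t : ℝ => ⟪∇ f (y + t • v), v⟫ - μ * ⟪y + t • v, v⟫)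
      (⟪H v, v⟫ - μ * ‖v‖ ^ 2) 0 := by
    refine (((hH.comp_hasDerivAt_of_eq 0 hline (by simp)).inner ℝ (hasDerivAt_const 0 v)).sub
      ((hline.inner ℝ (hasDerivAt_const 0 v)).const_mul μ)).congr_deriv ?_
    simp
  have h := (monotone_inner_gradient_sub_of_convexOn hf hconv y v).deriv_nonneg (x := 0)
  rw [hderiv.deriv] at h
  linarith

lemma mul_norm_le_norm_apply_of_convexOn (hf : Differentiable ℝ f)
    (hconv : ConvexOn ℝ Set.univ (fun y => f y - μ / 2 * ‖y‖ ^ 2)) {H : F →L[ℝ] F} {y : F}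
    (hH : HasFDerivAt (∇ f) H y) (v : F) :
    μ * ‖v‖ ≤ ‖H v‖ := by
  rcases eq_or_ne v 0 with rfl | hv
  · simp
  have h := (mul_sq_norm_le_inner_of_convexOn hf hconv hH v).trans (real_inner_le_norm _ _)
  rw [sq, ← mul_assoc] at h
  exact le_of_mul_le_mul_right h (norm_pos_iff.mpr hv)

end StrongConvexity

lemma sqrt_sq_add_sq_le_of_le {a b κ : ℝ} (ha : 0 ≤ a) (hb : 0 ≤ b) (h : b ≤ κ * a) :
    √(a ^ 2 + b ^ 2) ≤ √(1 + κ ^ 2) * a := by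
  rw [← Real.sqrt_sq ha, ← Real.sqrt_mul (by positivity), Real.sqrt_sq ha]
  refine Real.sqrt_le_sqrt ?_
  nlinarith [pow_le_pow_left₀ hb h 2]

section Bilevel

open InnerProductSpace

variable {m n : ℕ} {g : EuclideanSpace ℝ (Fin m) × EuclideanSpace ℝ (Fin n) → ℝ}

lemma contDiff_grady (hg : ContDiff ℝ 2 g) : ContDiff ℝ 1 (grady g) := by
  have h : grady g = fun p => (toDual ℝ _).symm.toLinearIsometry.toContinuousLinearMap
      (fderiv ℝ g p ∘L inr ℝ _ _) := by
    funext p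
    exact congrArg _ (fderiv_comp_prodMk_right_eq (hg.differentiable (by norm_num) p))
  rw [h]
  exact (ContinuousLinearMap.contDiff _).comp ((hg.fderiv_right le_rfl).clm_comp contDiff_const)

lemma crossxy_eq (hg : ContDiff ℝ 2 g) (p : EuclideanSpace ℝ (Fin m) × EuclideanSpace ℝ (Fin n)) :
    crossxy g p = fderiv ℝ (grady g) p ∘L inl ℝ _ _ :=
  fderiv_comp_prodMk_left_eq ((contDiff_grady hg).differentiable one_ne_zero p)

lemma hessyy_eq (hg : ContDiff ℝ 2 g) (p : EuclideanSpace ℝ (Fin m) × EuclideanSpace ℝ (Fin n)) :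
    hessyy g p = fderiv ℝ (grady g) p ∘L inr ℝ _ _ :=
  fderiv_comp_prodMk_right_eq ((contDiff_grady hg).differentiable one_ne_zero p)

lemma grady_eq_zero_of_forall_le {x : EuclideanSpace ℝ (Fin m)} {y₀ : EuclideanSpace ℝ (Fin n)}
    (hmin : ∀ y, g (x, y₀) ≤ g (x, y)) : grady g (x, y₀) = 0 := by
  have hloc : IsLocalMin (fun y => g (x, y)) y₀ := Filter.Eventually.of_forall hmin
  simp [grady, gradient, hloc.fderiv_eq_zero]

lemma hessyy_comp_fderiv_eq_neg_crossxy (hg : ContDiff ℝ 2 g)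
    {φ : EuclideanSpace ℝ (Fin m) → EuclideanSpace ℝ (Fin n)} (hφ : Differentiable ℝ φ)
    (hcrit : ∀ x, grady g (x, φ x) = 0) (x : EuclideanSpace ℝ (Fin m)) :
    hessyy g (x, φ x) ∘L fderiv ℝ φ x = -crossxy g (x, φ x) := by
  rw [hessyy_eq hg, crossxy_eq hg]
  exact fderiv_comp_inr_comp_fderiv_eq_neg hcrit
    ((contDiff_grady hg).differentiable one_ne_zero _) (hφ x)

lemma mul_norm_le_norm_hessyy_apply (hg : ContDiff ℝ 2 g) {μ : ℝ}
    {p : EuclideanSpace ℝ (Fin m) × EuclideanSpace ℝ (Fin n)}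
    (hsc : ConvexOn ℝ Set.univ (fun y => g (p.1, y) - μ / 2 * ‖y‖ ^ 2))
    (v : EuclideanSpace ℝ (Fin n)) :
    μ * ‖v‖ ≤ ‖hessyy g p v‖ := by
  have hgy : Differentiable ℝ (fun y => g (p.1, y)) :=
    (hg.differentiable (by norm_num)).comp (differentiable_const _ |>.prodMk differentiable_id)
  have hGy : Differentiable ℝ (fun y => grady g (p.1, y)) :=
    ((contDiff_grady hg).differentiable one_ne_zero).comp
      (differentiable_const _ |>.prodMk differentiable_id)
  exact mul_norm_le_norm_apply_of_convexOn hgy hsc (hGy p.2).hasFDerivAt v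

lemma norm_grady_sub_le {ℓ : ℝ}
    (hglip : ∀ p q : EuclideanSpace ℝ (Fin m) × EuclideanSpace ℝ (Fin n),
      √(‖gradx g p - gradx g q‖ ^ 2 + ‖grady g p - grady g q‖ ^ 2)
        ≤ ℓ * √(‖p.1 - q.1‖ ^ 2 + ‖p.2 - q.2‖ ^ 2))
    (x x' : EuclideanSpace ℝ (Fin m)) (y : EuclideanSpace ℝ (Fin n)) :
    ‖grady g (x, y) - grady g (x', y)‖ ≤ ℓ * ‖x - x'‖ :=
  calc ‖grady g (x, y) - grady g (x', y)‖
      ≤ √(‖gradx g (x, y) - gradx g (x', y)‖ ^ 2 + ‖grady g (x, y) - grady g (x', y)‖ ^ 2) :=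
        Real.le_sqrt_of_sq_le (le_add_of_nonneg_left (sq_nonneg _))
    _ ≤ ℓ * ‖x - x'‖ := by simpa [Real.sqrt_sq (norm_nonneg _)] using hglip (x, y) (x', y)

lemma norm_crossxy_le (hg : ContDiff ℝ 2 g) {ℓ : ℝ} (hℓ : 0 ≤ ℓ)
    (hglip : ∀ p q : EuclideanSpace ℝ (Fin m) × EuclideanSpace ℝ (Fin n),
      √(‖gradx g p - gradx g q‖ ^ 2 + ‖grady g p - grady g q‖ ^ 2)
        ≤ ℓ * √(‖p.1 - q.1‖ ^ 2 + ‖p.2 - q.2‖ ^ 2))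
    (p : EuclideanSpace ℝ (Fin m) × EuclideanSpace ℝ (Fin n)) :
    ‖crossxy g p‖ ≤ ℓ := by
  have hGx : Differentiable ℝ (fun x => grady g (x, p.2)) :=
    ((contDiff_grady hg).differentiable one_ne_zero).comp
      (differentiable_id.prodMk (differentiable_const _))
  exact (hGx p.1).hasFDerivAt.le_of_lip' hℓ
    (Filter.Eventually.of_forall fun x => norm_grady_sub_le hglip x p.1 p.2)

end Bilevel

theorem statement_3_general {m n : ℕ}
    (g : EuclideanSpace ℝ (Fin m) × EuclideanSpace ℝ (Fin n) → ℝ)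
    (μ ℓg1 ℓg2 : ℝ) (hμ : 0 < μ) (hℓg1 : 0 < ℓg1) (hℓg2 : 0 < ℓg2)
    (hg : ContDiff ℝ 2 g)
    (ystar : EuclideanSpace ℝ (Fin m) → EuclideanSpace ℝ (Fin n))
    -- μ-strong convexity of y ↦ g(x,y)
    (hsc : ∀ x, ConvexOn ℝ Set.univ (fun y => g (x, y) - μ / 2 * ‖y‖ ^ 2))
    -- y*(x) is the unique minimizer of y ↦ g(x,y)
    (hmin : ∀ x y, g (x, ystar x) ≤ g (x, y))
    -- y* is continuously differentiable
    (hystar : ContDiff ℝ 1 ystar)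
    -- ∇g is ℓ_{g,1}-Lipschitz in the joint variable
    (hglip : ∀ p q : EuclideanSpace ℝ (Fin m) × EuclideanSpace ℝ (Fin n),
      Real.sqrt (‖gradx g p - gradx g q‖ ^ 2 + ‖grady g p - grady g q‖ ^ 2)
        ≤ ℓg1 * Real.sqrt (‖p.1 - q.1‖ ^ 2 + ‖p.2 - q.2‖ ^ 2))
    -- ∇²_{xy} g and ∇²_{yy} g are ℓ_{g,2}-Lipschitz in operator norm
    (hcrosslip : ∀ p q : EuclideanSpace ℝ (Fin m) × EuclideanSpace ℝ (Fin n),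
      ‖crossxy g p - crossxy g q‖
        ≤ ℓg2 * Real.sqrt (‖p.1 - q.1‖ ^ 2 + ‖p.2 - q.2‖ ^ 2))
    (hhesslip : ∀ p q : EuclideanSpace ℝ (Fin m) × EuclideanSpace ℝ (Fin n),
      ‖hessyy g p - hessyy g q‖
        ≤ ℓg2 * Real.sqrt (‖p.1 - q.1‖ ^ 2 + ‖p.2 - q.2‖ ^ 2)) :
    ∀ x x', ‖fderiv ℝ ystar x - fderiv ℝ ystar x'‖ ≤
      (ℓg2 / μ + ℓg1 * ℓg2 / μ ^ 2) * Real.sqrt (1 + (ℓg1 / μ) ^ 2) * ‖x - x'‖ := by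
  have hystar' : Differentiable ℝ ystar := hystar.differentiable one_ne_zero
  have himplicit := hessyy_comp_fderiv_eq_neg_crossxy hg hystar'
    fun x => grady_eq_zero_of_forall_le (hmin x)
  have hcoer : ∀ x v, μ * ‖v‖ ≤ ‖hessyy g (x, ystar x) v‖ :=
    fun x => mul_norm_le_norm_hessyy_apply hg (hsc x)
  set κ := ℓg1 / μ
  have hDy : ∀ x, ‖fderiv ℝ ystar x‖ ≤ κ := fun x =>
    opNorm_le_div_of_comp_eq hμ (hcoer x) (himplicit x)
      ((norm_neg _).trans_le (norm_crossxy_le hg hℓg1.le hglip _))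
  intro x x'
  have hystar_lip : ‖ystar x - ystar x'‖ ≤ κ * ‖x - x'‖ :=
    convex_univ.norm_image_sub_le_of_norm_fderiv_le (fun z _ => hystar' z) (fun z _ => hDy z)
      (Set.mem_univ x') (Set.mem_univ x)
  set S := √(1 + κ ^ 2) * ‖x - x'‖
  have hdist : ℓg2 * √(‖x - x'‖ ^ 2 + ‖ystar x - ystar x'‖ ^ 2) ≤ ℓg2 * S :=
    mul_le_mul_of_nonneg_left (sqrt_sq_add_sq_le_of_le (norm_nonneg _) (norm_nonneg _)
      hystar_lip) hℓg2.le
  have hcross := (hcrosslip (x, ystar x) (x', ystar x')).trans hdist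
  have hhess := (hhesslip (x, ystar x) (x', ystar x')).trans hdist
  calc ‖fderiv ℝ ystar x - fderiv ℝ ystar x'‖ ≤ ℓg2 * S * (1 + κ) / μ :=
        opNorm_sub_le_of_comp_eq hμ (hcoer x) (himplicit x) (himplicit x')
          (by rwa [neg_sub_neg, norm_sub_rev]) hhess (hDy x')
    _ = (ℓg2 / μ + ℓg1 * ℓg2 / μ ^ 2) * √(1 + κ ^ 2) * ‖x - x'‖ := by
      simp only [S, κ]
      field_simp

/-- Lipschitzness of x ↦ D y*(x) in operator norm, with constant
L_{y*} = (ℓ_{g,2}/μ + ℓ_{g,1}ℓ_{g,2}/μ²)√(1+κ²), κ = ℓ_{g,1}/μ. -/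
theorem statement_3 {m n : ℕ}
    (g : EuclideanSpace ℝ (Fin m) × EuclideanSpace ℝ (Fin n) → ℝ)
    (μ ℓg1 ℓg2 : ℝ) (hμ : 0 < μ) (hℓg1 : 0 < ℓg1) (hℓg2 : 0 < ℓg2)
    (hg : ContDiff ℝ 2 g)
    (ystar : EuclideanSpace ℝ (Fin m) → EuclideanSpace ℝ (Fin n))
    -- μ-strong convexity of y ↦ g(x,y)
    (hsc : ∀ x, ConvexOn ℝ Set.univ (fun y => g (x, y) - μ / 2 * ‖y‖ ^ 2))
    -- y*(x) is the unique minimizer of y ↦ g(x,y)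
    (hmin : ∀ x y, g (x, ystar x) ≤ g (x, y))
    (huniq : ∀ x y, (∀ z, g (x, y) ≤ g (x, z)) → y = ystar x)
    -- y* is continuously differentiable
    (hystar : ContDiff ℝ 1 ystar)
    -- ∇g is ℓ_{g,1}-Lipschitz in the joint variable
    (hglip : ∀ p q : EuclideanSpace ℝ (Fin m) × EuclideanSpace ℝ (Fin n),
      Real.sqrt (‖gradx g p - gradx g q‖ ^ 2 + ‖grady g p - grady g q‖ ^ 2)
        ≤ ℓg1 * Real.sqrt (‖p.1 - q.1‖ ^ 2 + ‖p.2 - q.2‖ ^ 2))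
    -- ∇²_{xy} g and ∇²_{yy} g are ℓ_{g,2}-Lipschitz in operator norm
    (hcrosslip : ∀ p q : EuclideanSpace ℝ (Fin m) × EuclideanSpace ℝ (Fin n),
      ‖crossxy g p - crossxy g q‖
        ≤ ℓg2 * Real.sqrt (‖p.1 - q.1‖ ^ 2 + ‖p.2 - q.2‖ ^ 2))
    (hhesslip : ∀ p q : EuclideanSpace ℝ (Fin m) × EuclideanSpace ℝ (Fin n),
      ‖hessyy g p - hessyy g q‖
        ≤ ℓg2 * Real.sqrt (‖p.1 - q.1‖ ^ 2 + ‖p.2 - q.2‖ ^ 2)) :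
    ∀ x x', ‖fderiv ℝ ystar x - fderiv ℝ ystar x'‖ ≤
      (ℓg2 / μ + ℓg1 * ℓg2 / μ ^ 2) * Real.sqrt (1 + (ℓg1 / μ) ^ 2) * ‖x - x'‖ :=
  statement_3_general g μ ℓg1 ℓg2 hμ hℓg1 hℓg2 hg ystar hsc hmin hystar hglip hcrosslip hhesslip
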